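/- The function-space operation → on prime systems is continuous in each argument with respect to the substructure order ⊴, hence continuous as a binary operation: it is monotonic in both arguments, and for every ω-chain 𝒜₀ ⊴ 𝒜₁ ⊴ … and prime system ℬ, (⋃ᵢ𝒜ᵢ) → ℬ = ⋃ᵢ(𝒜ᵢ → ℬ) and ℬ → (⋃ᵢ𝒜ᵢ) = ⋃ᵢ(ℬ → 𝒜ᵢ). -/

import Mathlib

set_option autoImplicit false

namespace PrimeSys

universe u v

/-- The data of a prime system over a universe `α` of potential primes:
a set of primes, a consistency relation and an entailment relation. -/
structure PrimeData (α : Type u) where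
  carrier : Set α
  con : α → α → Prop
  le : α → α → Prop

/-- `A` is a prime system: `con` and `le` are relations on the prime set `carrier`;
`con` is reflexive and symmetric; `le` is a partial order; and consistency is
inherited downwards: if `a ≍ b` and `c ≤ b` then `a ≍ c`. -/
structure IsPrimeSystem {α : Type u} (A : PrimeData α) : Prop where
  con_mem : ∀ a b, A.con a b → a ∈ A.carrier ∧ b ∈ A.carrier
  le_mem : ∀ a b, A.le a b → a ∈ A.carrier ∧ b ∈ A.carrier
  con_refl : ∀ a ∈ A.carrier, A.con a a
  con_symm : ∀ a b, A.con a b → A.con b a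
  le_refl : ∀ a ∈ A.carrier, A.le a a
  le_antisymm : ∀ a b, A.le a b → A.le b a → a = b
  le_trans : ∀ a b c, A.le a b → A.le b c → A.le a c
  con_dcl : ∀ a b c, A.con a b → A.le c b → A.con a c

namespace PrimeData

variable {α : Type u}

/-- The elements of a prime system: downward closed, pairwise consistent
subsets of the prime set. -/
def IsElement (A : PrimeData α) (d : Set α) : Prop :=
  d ⊆ A.carrier ∧ (∀ a b, A.le a b → b ∈ d → a ∈ d) ∧ ∀ a ∈ d, ∀ b ∈ d, A.con a b

/-- The substructure relation `𝒜 ⊴ ℬ`: the prime set of `𝒜` is contained in that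
of `ℬ`, and consistency and entailment of `𝒜` are the restrictions of those of `ℬ`. -/
def Sub (A B : PrimeData α) : Prop :=
  A.carrier ⊆ B.carrier ∧
  ∀ a ∈ A.carrier, ∀ b ∈ A.carrier, (A.con a b ↔ B.con a b) ∧ (A.le a b ↔ B.le a b)

end PrimeData

/-- The least prime system `(∅, ∅, ∅)`. -/
def botPD (α : Type u) : PrimeData α := ⟨∅, fun _ _ => False, fun _ _ => False⟩

/-- The union `⋃ᵢ 𝒜ᵢ = (⋃ᵢ Aᵢ, ⋃ᵢ ≍ᵢ, ⋃ᵢ ≤ᵢ)` of an ω-chain of prime systems. -/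
def chainUnion {α : Type u} (A : ℕ → PrimeData α) : PrimeData α where
  carrier := ⋃ i, (A i).carrier
  con a b := ∃ i, (A i).con a b
  le a b := ∃ i, (A i).le a b

/-- An ω-chain `𝒜₀ ⊴ 𝒜₁ ⊴ 𝒜₂ ⊴ …` of prime systems. -/
def IsPSChain {α : Type u} (A : ℕ → PrimeData α) : Prop :=
  (∀ i, IsPrimeSystem (A i)) ∧ ∀ i, (A i).Sub (A (i + 1))

end PrimeSys

namespace PrimeSys

universe u v

variable {α : Type u} {β : Type v}

/-- `Ā`: the finite, pairwise consistent, pairwise incomparable subsets of the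
prime set of `𝒜`. -/
def Abar (A : PrimeData α) : Set (Set α) :=
  {X | X.Finite ∧ X ⊆ A.carrier ∧ ∀ a ∈ X, ∀ b ∈ X, A.con a b ∧ (A.le a b → a = b)}

/-- The function-space prime system `𝒜 → ℬ`: its primes are the pairs `(X, a)` with
`X ∈ Ā` and `a` a prime of `ℬ`; `(X,a) ≍ (Y,b)` iff (`X ≍ Y` implies `a ≍_B b`);
`(X,a) ≤ (Y,b)` iff `Y ≤ X` and `a ≤_B b`. -/
def funcPD (A : PrimeData α) (B : PrimeData β) : PrimeData (Set α × β) where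
  carrier := {p | p.1 ∈ Abar A ∧ p.2 ∈ B.carrier}
  con p q :=
    (p.1 ∈ Abar A ∧ p.2 ∈ B.carrier) ∧ (q.1 ∈ Abar A ∧ q.2 ∈ B.carrier) ∧
    ((∀ a ∈ p.1, ∀ b ∈ q.1, A.con a b) → B.con p.2 q.2)
  le p q :=
    (p.1 ∈ Abar A ∧ p.2 ∈ B.carrier) ∧ (q.1 ∈ Abar A ∧ q.2 ∈ B.carrier) ∧
    (∀ a ∈ q.1, ∃ b ∈ p.1, A.le a b) ∧ B.le p.2 q.2

end PrimeSys

/-!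
A prime of `𝒜 → ℬ` involves only a finite subset of `A` and a single prime of `B`, and a finite
subset of the primes of `⋃ᵢ𝒜ᵢ` already lies in some `Aᵢ`. Since `⊴` preserves consistency and
entailment, `→` is `⊴`-monotone in each argument, so the `𝒜ᵢ → ℬ` (resp. `ℬ → 𝒜ᵢ`) form an
increasing chain of substructures of `(⋃ᵢ𝒜ᵢ) → ℬ` (resp. `ℬ → ⋃ᵢ𝒜ᵢ`), and by finiteness they
exhaust its primes. A structure whose relations hold only between primes and whose primes are
exhausted by an increasing chain of substructures is the union of that chain.
-/

namespace PrimeSys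

universe u' v'

namespace PrimeData

variable {γ : Type*}

theorem ext {A B : PrimeData γ} (hcarrier : A.carrier = B.carrier) (hcon : A.con = B.con)
    (hle : A.le = B.le) : A = B := by
  cases A; cases B; simp_all

theorem Sub.refl (A : PrimeData γ) : A.Sub A :=
  ⟨subset_rfl, fun _ _ _ _ => ⟨Iff.rfl, Iff.rfl⟩⟩

theorem Sub.trans {A B C : PrimeData γ} (hAB : A.Sub B) (hBC : B.Sub C) : A.Sub C :=
  ⟨hAB.1.trans hBC.1, fun a ha b hb =>
    ⟨(hAB.2 a ha b hb).1.trans (hBC.2 a (hAB.1 ha) b (hAB.1 hb)).1,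
     (hAB.2 a ha b hb).2.trans (hBC.2 a (hAB.1 ha) b (hAB.1 hb)).2⟩⟩

def IsRelOnCarrier (A : PrimeData γ) : Prop :=
  (∀ a b, A.con a b → a ∈ A.carrier ∧ b ∈ A.carrier) ∧
  ∀ a b, A.le a b → a ∈ A.carrier ∧ b ∈ A.carrier

theorem eq_chainUnion {F : ℕ → PrimeData γ} {C : PrimeData γ}
    (hmono : Monotone fun i => (F i).carrier) (hF : ∀ i, (F i).IsRelOnCarrier)
    (hC : C.IsRelOnCarrier) (hsub : ∀ i, (F i).Sub C)
    (hcover : C.carrier ⊆ ⋃ i, (F i).carrier) : C = chainUnion F := by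
  have common : ∀ {a b}, a ∈ C.carrier → b ∈ C.carrier →
      ∃ k, a ∈ (F k).carrier ∧ b ∈ (F k).carrier := fun ha hb => by
    obtain ⟨i, hi⟩ := Set.mem_iUnion.mp (hcover ha)
    obtain ⟨j, hj⟩ := Set.mem_iUnion.mp (hcover hb)
    exact ⟨max i j, hmono (le_max_left i j) hi, hmono (le_max_right i j) hj⟩
  refine PrimeData.ext (hcover.antisymm (Set.iUnion_subset fun i => (hsub i).1)) ?_ ?_ <;>
    ext a b
  · refine ⟨fun h => ?_, fun ⟨i, h⟩ => ?_⟩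
    · obtain ⟨k, ha, hb⟩ := common (hC.1 a b h).1 (hC.1 a b h).2
      exact ⟨k, ((hsub k).2 a ha b hb).1.mpr h⟩
    · exact ((hsub i).2 a ((hF i).1 a b h).1 b ((hF i).1 a b h).2).1.mp h
  · refine ⟨fun h => ?_, fun ⟨i, h⟩ => ?_⟩
    · obtain ⟨k, ha, hb⟩ := common (hC.2 a b h).1 (hC.2 a b h).2
      exact ⟨k, ((hsub k).2 a ha b hb).2.mpr h⟩
    · exact ((hsub i).2 a ((hF i).2 a b h).1 b ((hF i).2 a b h).2).2.mp h

end PrimeData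

open PrimeData

namespace IsPSChain

variable {γ : Type*} {A : ℕ → PrimeData γ}

theorem sub_of_le (hA : IsPSChain A) {i j : ℕ} (hij : i ≤ j) : (A i).Sub (A j) := by
  induction j, hij using Nat.le_induction with
  | base => exact Sub.refl _
  | succ n _ ih => exact ih.trans (hA.2 n)

theorem sub_chainUnion (hA : IsPSChain A) (i : ℕ) : (A i).Sub (chainUnion A) := by
  refine ⟨Set.subset_iUnion (fun j => (A j).carrier) i, fun a ha b hb => ⟨?_, ?_⟩⟩
  · refine ⟨fun h => ⟨i, h⟩, fun ⟨j, h⟩ => ?_⟩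
    obtain ⟨ha', hb'⟩ := (hA.1 j).con_mem a b h
    exact ((hA.sub_of_le (le_max_left i j)).2 a ha b hb).1.mpr
      (((hA.sub_of_le (le_max_right i j)).2 a ha' b hb').1.mp h)
  · refine ⟨fun h => ⟨i, h⟩, fun ⟨j, h⟩ => ?_⟩
    obtain ⟨ha', hb'⟩ := (hA.1 j).le_mem a b h
    exact ((hA.sub_of_le (le_max_left i j)).2 a ha b hb).2.mpr
      (((hA.sub_of_le (le_max_right i j)).2 a ha' b hb').2.mp h)

theorem exists_subset_carrier_of_finite (hA : IsPSChain A) {X : Set γ} (hX : X.Finite)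
    (hXA : X ⊆ (chainUnion A).carrier) : ∃ i, X ⊆ (A i).carrier := by
  have hmono : Monotone fun i => (A i).carrier :=
    monotone_nat_of_le_succ fun i => (hA.2 i).1
  rw [← hX.coe_toFinset] at hXA ⊢
  exact hmono.directed_le.exists_mem_subset_of_finset_subset_biUnion hXA

end IsPSChain

section Abar

variable {γ : Type*} {A A' : PrimeData γ}

theorem mem_Abar_iff_of_sub (h : A.Sub A') {X : Set γ} (hX : X ⊆ A.carrier) :
    X ∈ Abar A ↔ X ∈ Abar A' := by
  have hrel : ∀ a ∈ X, ∀ b ∈ X, (A.con a b ∧ (A.le a b → a = b) ↔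
      A'.con a b ∧ (A'.le a b → a = b)) := fun a ha b hb => by
    rw [(h.2 a (hX ha) b (hX hb)).1, (h.2 a (hX ha) b (hX hb)).2]
  exact and_congr_right fun _ => and_congr ⟨fun _ => hX.trans h.1, fun _ => hX⟩
    (forall₂_congr fun a ha => forall₂_congr fun b hb => hrel a ha b hb)

theorem Abar_mono (h : A.Sub A') : Abar A ⊆ Abar A' :=
  fun _ hX => (mem_Abar_iff_of_sub h hX.2.1).mp hX

theorem IsPSChain.exists_mem_Abar {A : ℕ → PrimeData γ} (hA : IsPSChain A) {X : Set γ}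
    (hX : X ∈ Abar (chainUnion A)) : ∃ i, X ∈ Abar (A i) := by
  obtain ⟨i, hi⟩ := hA.exists_subset_carrier_of_finite hX.1 hX.2.1
  exact ⟨i, (mem_Abar_iff_of_sub (hA.sub_chainUnion i) hi).mpr hX⟩

end Abar

section funcPD

variable {α : Type u'} {β : Type v'}

theorem funcPD_isRelOnCarrier (A : PrimeData α) (B : PrimeData β) :
    (funcPD A B).IsRelOnCarrier :=
  ⟨fun _ _ h => ⟨h.1, h.2.1⟩, fun _ _ h => ⟨h.1, h.2.1⟩⟩

theorem funcPD_sub_funcPD_left {A A' : PrimeData α} (h : A.Sub A') (B : PrimeData β) :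
    (funcPD A B).Sub (funcPD A' B) := by
  refine ⟨fun p hp => ⟨Abar_mono h hp.1, hp.2⟩, fun p hp q hq => ?_⟩
  have hcon : (∀ a ∈ p.1, ∀ b ∈ q.1, A.con a b) ↔ ∀ a ∈ p.1, ∀ b ∈ q.1, A'.con a b :=
    forall₂_congr fun a ha => forall₂_congr fun b hb => (h.2 a (hp.1.2.1 ha) b (hq.1.2.1 hb)).1
  have hle : (∀ a ∈ q.1, ∃ b ∈ p.1, A.le a b) ↔ ∀ a ∈ q.1, ∃ b ∈ p.1, A'.le a b :=
    forall₂_congr fun a ha =>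
      exists_congr fun b => and_congr_right fun hb => (h.2 a (hq.1.2.1 ha) b (hp.1.2.1 hb)).2
  simp only [funcPD, hp.1, hp.2, hq.1, hq.2, Abar_mono h hp.1, Abar_mono h hq.1, hcon, hle,
    and_self]

theorem funcPD_sub_funcPD_right (A : PrimeData α) {B B' : PrimeData β} (h : B.Sub B') :
    (funcPD A B).Sub (funcPD A B') := by
  refine ⟨fun p hp => ⟨hp.1, h.1 hp.2⟩, fun p hp q hq => ?_⟩
  simp only [funcPD, hp.1, hp.2, hq.1, hq.2, h.1 hp.2, h.1 hq.2, h.2 p.2 hp.2 q.2 hq.2,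
    and_self]

theorem funcPD_chainUnion_left {A : ℕ → PrimeData α} (hA : IsPSChain A) (B : PrimeData β) :
    funcPD (chainUnion A) B = chainUnion fun i => funcPD (A i) B :=
  eq_chainUnion (monotone_nat_of_le_succ fun i => (funcPD_sub_funcPD_left (hA.2 i) B).1)
    (fun _ => funcPD_isRelOnCarrier _ _) (funcPD_isRelOnCarrier _ _)
    (fun i => funcPD_sub_funcPD_left (hA.sub_chainUnion i) B)
    fun _ hp => have ⟨i, hi⟩ := hA.exists_mem_Abar hp.1; Set.mem_iUnion.mpr ⟨i, hi, hp.2⟩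

theorem funcPD_chainUnion_right (A : PrimeData α) {B : ℕ → PrimeData β} (hB : IsPSChain B) :
    funcPD A (chainUnion B) = chainUnion fun i => funcPD A (B i) :=
  eq_chainUnion (monotone_nat_of_le_succ fun i => (funcPD_sub_funcPD_right A (hB.2 i)).1)
    (fun _ => funcPD_isRelOnCarrier _ _) (funcPD_isRelOnCarrier _ _)
    (fun i => funcPD_sub_funcPD_right A (hB.sub_chainUnion i))
    fun _ hp => have ⟨i, hi⟩ := Set.mem_iUnion.mp hp.2; Set.mem_iUnion.mpr ⟨i, hp.1, hi⟩

end funcPD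

/-- The function-space operation `→` on prime systems is
continuous in each argument with respect to `⊴`, hence continuous as a binary
operation: it is monotonic in both arguments, and for every ω-chain
`𝒜₀ ⊴ 𝒜₁ ⊴ …` and prime system `ℬ`, `(⋃ᵢ𝒜ᵢ) → ℬ = ⋃ᵢ(𝒜ᵢ → ℬ)` and
`ℬ → (⋃ᵢ𝒜ᵢ) = ⋃ᵢ(ℬ → 𝒜ᵢ)`. -/
theorem funcPD_continuous {α : Type u'} {β : Type v'} :
    (∀ (A A' : PrimeData α) (B : PrimeData β),
      IsPrimeSystem A → IsPrimeSystem A' → IsPrimeSystem B →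
      A.Sub A' → (funcPD A B).Sub (funcPD A' B)) ∧
    (∀ (A : PrimeData α) (B B' : PrimeData β),
      IsPrimeSystem A → IsPrimeSystem B → IsPrimeSystem B' →
      B.Sub B' → (funcPD A B).Sub (funcPD A B')) ∧
    (∀ (A : ℕ → PrimeData α) (B : PrimeData β), IsPSChain A → IsPrimeSystem B →
      funcPD (chainUnion A) B = chainUnion (fun i => funcPD (A i) B)) ∧
    (∀ (B : PrimeData α) (A : ℕ → PrimeData β), IsPrimeSystem B → IsPSChain A →
      funcPD B (chainUnion A) = chainUnion (fun i => funcPD B (A i))) :=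
  ⟨fun _ _ B _ _ _ h => funcPD_sub_funcPD_left h B,
   fun A _ _ _ _ _ h => funcPD_sub_funcPD_right A h,
   fun _ B hA _ => funcPD_chainUnion_left hA B,
   fun B _ _ hA => funcPD_chainUnion_right B hA⟩

end PrimeSys
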